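/- arXiv:1709.03678 — 4 statements merged into one kernel-verified Lean document; each statement's English description precedes it below -/
import Mathlib

section
/- The number of maximal independent sets in the path graph P_n satisfies the recurrence a(n) = a(n-2) + a(n-3) for n ≥ 4, with a(1) = 1, a(2) = 2, a(3) = 2. -/
/-- The m×n grid graph on {0,...,m-1}×{0,...,n-1}: edges between points at distance 1. -/
def gridGraph (m n : ℕ) : SimpleGraph (Fin m × Fin n) :=
  SimpleGraph.fromRel (fun u v =>
    (u.1 = v.1 ∧ u.2.1 + 1 = v.2.1) ∨ (u.2 = v.2 ∧ u.1.1 + 1 = v.1.1))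

/-- S is a maximal independent set: independent, and every vertex outside S has a neighbor in S. -/
def IsMaxIndep {V : Type*} (G : SimpleGraph V) (S : Set V) : Prop :=
  (∀ u ∈ S, ∀ v ∈ S, ¬ G.Adj u v) ∧ ∀ v ∉ S, ∃ u ∈ S, G.Adj v u

/-- The number of maximal independent sets of G. -/
noncomputable def numMIS {V : Type*} (G : SimpleGraph V) : ℕ :=
  Nat.card {S : Set V // IsMaxIndep G S}

/-!
A maximal independent set of a graph contains a leaf `v` or its unique neighbour `w`, never
both, and those containing a given vertex `x` are exactly `{x} ∪ T` for `T` a maximal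
independent set of `G - N[x]` (vertices of `N(x)` are not in the set, so cannot dominate
anything else). In `P_n` take `v = 0`, `w = 1`: removing `N[0]` or `N[1]` leaves `P_{n-2}` or
`P_{n-3}`. The recurrence thus holds from `n = 2` on, and the edgeless `P_0`, `P_1` have one
maximal independent set each.
-/

open SimpleGraph

variable {V W : Type*} {G : SimpleGraph V} {H : SimpleGraph W}

theorem isMaxIndep_bot_iff {S : Set V} : IsMaxIndep (⊥ : SimpleGraph V) S ↔ S = Set.univ := by
  simp [IsMaxIndep, Set.eq_univ_iff_forall]

theorem numMIS_bot : numMIS (⊥ : SimpleGraph V) = 1 := by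
  simp [numMIS, isMaxIndep_bot_iff]

theorem IsMaxIndep.image (e : G ≃g H) {S : Set V} (hS : IsMaxIndep G S) :
    IsMaxIndep H (e '' S) := by
  refine ⟨?_, fun w hw => ?_⟩
  · rintro _ ⟨u, hu, rfl⟩ _ ⟨v, hv, rfl⟩
    rw [e.map_adj_iff]
    exact hS.1 u hu v hv
  · obtain ⟨u, hu, hadj⟩ := hS.2 (e.symm w) fun h => hw ⟨_, h, by simp⟩
    exact ⟨e u, Set.mem_image_of_mem e hu, by simpa using e.map_adj_iff.mpr hadj⟩

theorem isMaxIndep_image_iff (e : G ≃g H) {S : Set V} :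
    IsMaxIndep H (e '' S) ↔ IsMaxIndep G S := by
  refine ⟨fun h => ?_, IsMaxIndep.image e⟩
  simpa [Set.image_image] using h.image e.symm

theorem numMIS_congr (e : G ≃g H) : numMIS G = numMIS H :=
  Nat.card_congr <| (Equiv.Set.congr e.toEquiv).subtypeEquiv fun _ =>
    (isMaxIndep_image_iff e).symm

def closedNeighborSet (G : SimpleGraph V) (v : V) : Set V := insert v (G.neighborSet v)

theorem mem_compl_closedNeighborSet {v u : V} :
    u ∈ (closedNeighborSet G v)ᶜ ↔ u ≠ v ∧ ¬ G.Adj v u := by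
  simp [closedNeighborSet]

theorem IsMaxIndep.preimage_val {S : Set V} {w : V} (hS : IsMaxIndep G S) (hw : w ∈ S) :
    IsMaxIndep (G.induce (closedNeighborSet G w)ᶜ) (Subtype.val ⁻¹' S) := by
  refine ⟨fun u hu v hv => hS.1 u hu v hv, fun v hv => ?_⟩
  obtain ⟨u, hu, hvu⟩ := hS.2 v hv
  have hv' := mem_compl_closedNeighborSet.mp v.2
  refine ⟨⟨u, mem_compl_closedNeighborSet.mpr ⟨?_, hS.1 w hw u hu⟩⟩, hu, hvu⟩
  rintro rfl
  exact hv'.2 hvu.symm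

theorem IsMaxIndep.insert_image_val {w : V} {T : Set ↥(closedNeighborSet G w)ᶜ}
    (hT : IsMaxIndep (G.induce (closedNeighborSet G w)ᶜ) T) :
    IsMaxIndep G (insert w (Subtype.val '' T)) := by
  have hw : ∀ u ∈ Subtype.val '' T, ¬ G.Adj w u := by
    rintro _ ⟨u, -, rfl⟩
    exact (mem_compl_closedNeighborSet.mp u.2).2
  refine ⟨?_, fun v hv => ?_⟩
  · rintro u (rfl | hu) v (rfl | hv)
    · exact G.irrefl
    · exact hw v hv
    · exact fun h => hw u hu h.symm
    · obtain ⟨u, hu, rfl⟩ := hu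
      obtain ⟨v, hv, rfl⟩ := hv
      exact hT.1 u hu v hv
  · rw [Set.mem_insert_iff, not_or] at hv
    by_cases hvw : G.Adj v w
    · exact ⟨w, Set.mem_insert w _, hvw⟩
    · have hvR : v ∈ (closedNeighborSet G w)ᶜ :=
        mem_compl_closedNeighborSet.mpr ⟨hv.1, fun h => hvw h.symm⟩
      obtain ⟨u, hu, hvu⟩ := hT.2 ⟨v, hvR⟩ fun h => hv.2 ⟨_, h, rfl⟩
      exact ⟨u, Set.mem_insert_of_mem w ⟨u, hu, rfl⟩, hvu⟩

theorem IsMaxIndep.subset_insert_compl_closedNeighborSet {S : Set V} {w : V}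
    (hS : IsMaxIndep G S) (hw : w ∈ S) : S ⊆ insert w (closedNeighborSet G w)ᶜ := by
  intro u hu
  by_cases huw : u = w
  · exact Or.inl huw
  · exact Or.inr (mem_compl_closedNeighborSet.mpr ⟨huw, hS.1 w hw u hu⟩)

def isMaxIndepMemEquiv (w : V) :
    {S // IsMaxIndep G S ∧ w ∈ S} ≃
      {T // IsMaxIndep (G.induce (closedNeighborSet G w)ᶜ) T} where
  toFun S := ⟨Subtype.val ⁻¹' S.1, S.2.1.preimage_val S.2.2⟩
  invFun T := ⟨insert w (Subtype.val '' T.1), T.2.insert_image_val, Set.mem_insert w _⟩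
  left_inv := fun ⟨S, hS, hw⟩ => Subtype.ext <| by
    show insert w (Subtype.val '' (Subtype.val ⁻¹' S)) = S
    rw [Subtype.image_preimage_coe]
    refine (Set.insert_subset hw Set.inter_subset_right).antisymm fun u hu => ?_
    rcases hS.subset_insert_compl_closedNeighborSet hw hu with rfl | hR
    exacts [Set.mem_insert _ _, Set.mem_insert_of_mem _ ⟨hR, hu⟩]
  right_inv := fun ⟨T, _⟩ => Subtype.ext <| by
    ext ⟨u, hu⟩
    rw [Set.mem_preimage, Set.mem_insert_iff, Subtype.val_injective.mem_set_image,
      or_iff_right (mem_compl_closedNeighborSet.mp hu).1]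

theorem card_isMaxIndep_mem (w : V) :
    Nat.card {S // IsMaxIndep G S ∧ w ∈ S} = numMIS (G.induce (closedNeighborSet G w)ᶜ) :=
  Nat.card_congr (isMaxIndepMemEquiv w)

theorem IsMaxIndep.mem_or_mem_of_neighborSet_eq_singleton {S : Set V} {v w : V}
    (hS : IsMaxIndep G S) (h : G.neighborSet v = {w}) : v ∈ S ∨ w ∈ S := by
  refine or_iff_not_imp_left.mpr fun hv => ?_
  obtain ⟨u, hu, hvu⟩ := hS.2 v hv
  rwa [← Set.mem_singleton_iff.mp (h ▸ hvu : u ∈ ({w} : Set V))]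

theorem numMIS_eq_add_of_neighborSet_eq_singleton [Finite V] {v w : V}
    (h : G.neighborSet v = {w}) :
    numMIS G = numMIS (G.induce (closedNeighborSet G v)ᶜ) +
      numMIS (G.induce (closedNeighborSet G w)ᶜ) := by
  classical
  have hvw : G.Adj v w := (G.mem_neighborSet v w).mp (h ▸ rfl)
  have hdisj : Disjoint (fun S => IsMaxIndep G S ∧ v ∈ S) (fun S => IsMaxIndep G S ∧ w ∈ S) :=
    disjoint_iff_inf_le.mpr fun S ⟨⟨hS, hv⟩, _, hw⟩ => hS.1 v hv w hw hvw
  rw [← card_isMaxIndep_mem, ← card_isMaxIndep_mem, ← Nat.card_sum]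
  refine Nat.card_congr <| (Equiv.subtypeEquivRight fun S => ?_).trans (subtypeOrEquiv _ _ hdisj)
  exact ⟨fun hS => (hS.mem_or_mem_of_neighborSet_eq_singleton h).imp (⟨hS, ·⟩) (⟨hS, ·⟩),
    fun hS => hS.elim And.left And.left⟩

def pathGraphInduceLeIso (n k : ℕ) :
    (pathGraph n).induce {u : Fin n | k ≤ u.val} ≃g pathGraph (n - k) where
  toFun u := ⟨u.1.val - k, by have : k ≤ u.1.val := u.2; omega⟩
  invFun i := ⟨⟨i.val + k, by omega⟩, Nat.le_add_left k i⟩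
  left_inv u := by
    have : k ≤ u.1.val := u.2
    ext; simp only; omega
  right_inv i := by ext; simp
  map_rel_iff' {u v} := by
    have : k ≤ u.1.val := u.2
    have : k ≤ v.1.val := v.2
    simp only [Equiv.coe_fn_mk, pathGraph_adj, induce_adj]
    omega

theorem pathGraph_neighborSet_zero {n : ℕ} (hn : 2 ≤ n) :
    (pathGraph n).neighborSet ⟨0, by omega⟩ = {⟨1, hn⟩} := by
  ext u
  simp only [mem_neighborSet, pathGraph_adj, Set.mem_singleton_iff, Fin.ext_iff]
  omega

theorem compl_closedNeighborSet_pathGraph {n : ℕ} (v : Fin n) :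
    (closedNeighborSet (pathGraph n) v)ᶜ = {u | u.val + 1 < v.val ∨ v.val + 1 < u.val} := by
  ext u
  rw [mem_compl_closedNeighborSet, Set.mem_ofPred_eq, pathGraph_adj, Ne, Fin.ext_iff]
  omega

/-- For `n = 2` the truncated `n - 3 = 0` is still right: `N[1]` is everything and `P_0` has
exactly one maximal independent set. -/
theorem numMIS_pathGraph (n : ℕ) (hn : 2 ≤ n) :
    numMIS (pathGraph n) = numMIS (pathGraph (n - 2)) + numMIS (pathGraph (n - 3)) := by
  have h0 : (closedNeighborSet (pathGraph n) ⟨0, by omega⟩)ᶜ = {u | 2 ≤ u.val} := by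
    rw [compl_closedNeighborSet_pathGraph]
    exact Set.ext fun u => by simp only [Set.mem_ofPred_eq]; omega
  have h1 : (closedNeighborSet (pathGraph n) ⟨1, hn⟩)ᶜ = {u | 3 ≤ u.val} := by
    rw [compl_closedNeighborSet_pathGraph]
    exact Set.ext fun u => by simp only [Set.mem_ofPred_eq]; omega
  rw [numMIS_eq_add_of_neighborSet_eq_singleton (pathGraph_neighborSet_zero hn), h0, h1,
    numMIS_congr (pathGraphInduceLeIso n 2), numMIS_congr (pathGraphInduceLeIso n 3)]

theorem pathGraph_eq_bot_of_le_one {n : ℕ} (hn : n ≤ 1) : pathGraph n = ⊥ := by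
  have : Subsingleton (Fin n) := Fin.subsingleton_iff_le_one.mpr hn
  exact Subsingleton.elim _ _

theorem mis_path_recurrence :
    numMIS (SimpleGraph.pathGraph 1) = 1 ∧
    numMIS (SimpleGraph.pathGraph 2) = 2 ∧
    numMIS (SimpleGraph.pathGraph 3) = 2 ∧
    ∀ n : ℕ, 4 ≤ n →
      numMIS (SimpleGraph.pathGraph n) =
        numMIS (SimpleGraph.pathGraph (n - 2)) + numMIS (SimpleGraph.pathGraph (n - 3)) := by
  have h0 : numMIS (pathGraph 0) = 1 := by rw [pathGraph_eq_bot_of_le_one zero_le_one, numMIS_bot]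
  have h1 : numMIS (pathGraph 1) = 1 := by rw [pathGraph_eq_bot_of_le_one le_rfl, numMIS_bot]
  refine ⟨h1, ?_, ?_, fun n hn => numMIS_pathGraph n (by omega)⟩
  · rw [numMIS_pathGraph 2 le_rfl]
    simp [h0]
  · rw [numMIS_pathGraph 3 (by norm_num)]
    simp [h0, h1]
end

section
/- For all positive integers m₁, m₂, n, the number of maximal independent sets satisfies the supermultiplicativity inequality σ(Z_{m₁×n}) · σ(Z_{m₂×n}) ≤ σ(Z_{(m₁+m₂+1)×n}). -/
/-!
Place the two grids in the big one as the first `m₁` rows and the last `m₂` rows, leaving one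
empty row between them. The union of a maximal independent set of each grid is then independent
in the big grid and extends to a maximal independent set `S` there. Since each of the two pieces
dominates its own grid, `S` meets each embedded grid in exactly the piece we started from, so the
pair of pieces can be read back from `S` and the extension map is injective.
-/

open SimpleGraph

section MaximalIndependentSets

variable {V W : Type*}

lemma IsMaxIndep.isIndepSet {G : SimpleGraph V} {S : Set V} (hS : IsMaxIndep G S) :
    G.IsIndepSet S :=
  fun u hu v hv _ => hS.1 u hu v hv

lemma isMaxIndep_of_maximal {G : SimpleGraph V} {S : Set V} (hS : Maximal G.IsIndepSet S) :
    IsMaxIndep G S := by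
  refine ⟨fun u hu v hv huv => hS.1 hu hv (G.ne_of_adj huv) huv, fun v hv => ?_⟩
  by_contra! hfree
  have hins : G.IsIndepSet (insert v S) :=
    hS.1.insert fun u hu _ => ⟨hfree u hu, fun huv => hfree u hu huv.symm⟩
  exact hv (hS.2 hins (Set.subset_insert v S) (Set.mem_insert v S))

lemma exists_isMaxIndep_superset [Finite V] {G : SimpleGraph V} {S₀ : Set V}
    (h : G.IsIndepSet S₀) : ∃ S, S₀ ⊆ S ∧ IsMaxIndep G S := by
  obtain ⟨S, hle, hS⟩ := Finite.exists_le_maximal h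
  exact ⟨S, hle, isMaxIndep_of_maximal hS⟩

lemma preimage_eq_of_image_subset {G : SimpleGraph V} {H : SimpleGraph W} (f : G →g H)
    {T : Set V} {S : Set W} (hT : IsMaxIndep G T) (hS : H.IsIndepSet S) (hTS : f '' T ⊆ S) :
    f ⁻¹' S = T := by
  refine Set.Subset.antisymm (fun v hv => ?_) (Set.image_subset_iff.mp hTS)
  by_contra hvT
  obtain ⟨u, hu, hvu⟩ := hT.2 v hvT
  have hfvu := f.map_adj hvu
  exact hS hv (hTS ⟨u, hu, rfl⟩) (H.ne_of_adj hfvu) hfvu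

variable {V₁ V₂ : Type*} {G₁ : SimpleGraph V₁} {G₂ : SimpleGraph V₂} {H : SimpleGraph W}

lemma isIndepSet_image_union_image (f₁ : G₁ ↪g H) (f₂ : G₂ ↪g H)
    (hsep : ∀ a b, ¬ H.Adj (f₁ a) (f₂ b)) {S₁ : Set V₁} {S₂ : Set V₂}
    (h₁ : G₁.IsIndepSet S₁) (h₂ : G₂.IsIndepSet S₂) : H.IsIndepSet (f₁ '' S₁ ∪ f₂ '' S₂) := by
  rintro _ (⟨a, ha, rfl⟩ | ⟨a, ha, rfl⟩) _ (⟨b, hb, rfl⟩ | ⟨b, hb, rfl⟩) hne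
  · rw [f₁.map_adj_iff]; exact h₁ ha hb (fun hab => hne (congrArg f₁ hab))
  · exact hsep a b
  · exact fun hadj => hsep b a hadj.symm
  · rw [f₂.map_adj_iff]; exact h₂ ha hb (fun hab => hne (congrArg f₂ hab))

lemma exists_isMaxIndep_preimage_eq [Finite W] (f₁ : G₁ ↪g H) (f₂ : G₂ ↪g H)
    (hsep : ∀ a b, ¬ H.Adj (f₁ a) (f₂ b)) {S₁ : Set V₁} {S₂ : Set V₂}
    (h₁ : IsMaxIndep G₁ S₁) (h₂ : IsMaxIndep G₂ S₂) :
    ∃ S : {S // IsMaxIndep H S}, f₁ ⁻¹' S = S₁ ∧ f₂ ⁻¹' S = S₂ := by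
  obtain ⟨S, hsub, hS⟩ := exists_isMaxIndep_superset
    (isIndepSet_image_union_image f₁ f₂ hsep h₁.isIndepSet h₂.isIndepSet)
  exact ⟨⟨S, hS⟩,
    preimage_eq_of_image_subset f₁.toHom h₁ hS.isIndepSet (Set.subset_union_left.trans hsub),
    preimage_eq_of_image_subset f₂.toHom h₂ hS.isIndepSet (Set.subset_union_right.trans hsub)⟩

theorem numMIS_mul_le_of_embeddings [Finite W] (f₁ : G₁ ↪g H) (f₂ : G₂ ↪g H)
    (hsep : ∀ a b, ¬ H.Adj (f₁ a) (f₂ b)) : numMIS G₁ * numMIS G₂ ≤ numMIS H := by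
  choose g hg₁ hg₂ using fun p : {S // IsMaxIndep G₁ S} × {S // IsMaxIndep G₂ S} =>
    exists_isMaxIndep_preimage_eq f₁ f₂ hsep p.1.2 p.2.2
  have hinj : Function.Injective g := by
    intro p q hgpq
    ext : 2
    · rw [← hg₁ p, ← hg₁ q, hgpq]
    · rw [← hg₂ p, ← hg₂ q, hgpq]
  rw [numMIS, numMIS, numMIS, ← Nat.card_prod]
  exact Nat.card_le_card_of_injective _ hinj

end MaximalIndependentSets

def gridRowShift {m M : ℕ} (n k : ℕ) (h : k + m ≤ M) : gridGraph m n ↪g gridGraph M n where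
  toFun p := (⟨k + p.1, by omega⟩, p.2)
  inj' p q hpq := by
    simp only [Prod.ext_iff, Fin.ext_iff, Nat.add_left_cancel_iff] at hpq ⊢
    exact hpq
  map_rel_iff' {p q} := by
    change (gridGraph M n).Adj (⟨k + p.1, _⟩, p.2) (⟨k + q.1, _⟩, q.2) ↔ _
    simp only [gridGraph, fromRel_adj, ne_eq, Prod.ext_iff, Fin.ext_iff]
    omega

@[simp]
lemma gridRowShift_apply {m M : ℕ} (n k : ℕ) (h : k + m ≤ M) (p : Fin m × Fin n) :
    gridRowShift n k h p = (⟨k + p.1, by omega⟩, p.2) :=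
  rfl

lemma gridGraph_not_adj_of_add_two_le {M n : ℕ} {u v : Fin M × Fin n}
    (h : (u.1 : ℕ) + 2 ≤ v.1) : ¬(gridGraph M n).Adj u v := by
  simp only [gridGraph, fromRel_adj, Fin.ext_iff]
  omega

theorem mis_supermultiplicative_general (m₁ m₂ n : ℕ) :
    numMIS (gridGraph m₁ n) * numMIS (gridGraph m₂ n) ≤ numMIS (gridGraph (m₁ + m₂ + 1) n) :=
  numMIS_mul_le_of_embeddings (gridRowShift n 0 (by omega)) (gridRowShift n (m₁ + 1) (by omega))
    fun a b => gridGraph_not_adj_of_add_two_le (by simp only [gridRowShift_apply]; omega)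

theorem mis_supermultiplicative (m₁ m₂ n : ℕ) (hm₁ : 0 < m₁) (hm₂ : 0 < m₂) (hn : 0 < n) :
    numMIS (gridGraph m₁ n) * numMIS (gridGraph m₂ n) ≤ numMIS (gridGraph (m₁ + m₂ + 1) n) :=
  mis_supermultiplicative_general m₁ m₂ n
end

section
/- (Two-dimensional Fekete lemma) Let (a_{m,n})_{m,n≥1} be a double sequence of real numbers with a_{m,n} ≥ 1 for all m,n, satisfying a_{m₁,n} · a_{m₂,n} ≤ a_{m₁+m₂+1,n} and a_{m,n₁} · a_{m,n₂} ≤ a_{m,n₁+n₂+1} for all indices. If sup_{m,n≥1} a_{m,n}^{1/((m+1)(n+1))} is finite, then the limit of a_{m,n}^{1/(mn)} as m,n → ∞ exists and equals sup_{m,n≥1} a_{m,n}^{1/((m+1)(n+1))}. -/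
/-!
Iterating the two supermultiplicativity inequalities gives `a p q ^ (k * l) ≤ a m n` as soon as
`k (p + 1) < m` and `l (q + 1) < n`. With `k = (m - 1) / (p + 1)` and `l = (n - 1) / (q + 1)` this
bounds `a m n ^ (1 / (m n))` below by `(a p q ^ (1 / ((p + 1) (q + 1)))) ^ e` with `e → 1`, so the
liminf is at least every element of the set whose supremum `L` we take. Conversely
`a m n ^ (1 / (m n)) ≤ L ^ ((1 + 1/m) (1 + 1/n))`, which tends to `L`.
-/

open Filter Topology

theorem pow_le_of_mul_lt {u : ℕ → ℝ} (hu_one : ∀ m, 1 ≤ m → 1 ≤ u m)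
    (hu_mul : ∀ m₁ m₂, 1 ≤ m₁ → 1 ≤ m₂ → u m₁ * u m₂ ≤ u (m₁ + m₂ + 1))
    {p : ℕ} (hp : 1 ≤ p) : ∀ {k m : ℕ}, k * (p + 1) < m → u p ^ k ≤ u m
  | 0, m, hm => by simpa using hu_one m (by omega)
  | k + 1, m, hm => by
    rw [add_mul, one_mul] at hm
    obtain ⟨m', rfl⟩ : ∃ m', m = m' + p + 1 := ⟨m - p - 1, by omega⟩
    have hm' : k * (p + 1) < m' := by omega
    calc u p ^ (k + 1) = u p ^ k * u p := pow_succ _ _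
      _ ≤ u m' * u p := by
        gcongr
        · linarith [hu_one p hp]
        · exact pow_le_of_mul_lt hu_one hu_mul hp hm'
      _ ≤ u (m' + p + 1) := hu_mul m' p (by omega) hp

theorem pow_mul_le_of_mul_lt (a : ℕ → ℕ → ℝ) (h1 : ∀ m n : ℕ, 1 ≤ m → 1 ≤ n → 1 ≤ a m n)
    (h2 : ∀ m₁ m₂ n : ℕ, 1 ≤ m₁ → 1 ≤ m₂ → 1 ≤ n → a m₁ n * a m₂ n ≤ a (m₁ + m₂ + 1) n)
    (h3 : ∀ m n₁ n₂ : ℕ, 1 ≤ m → 1 ≤ n₁ → 1 ≤ n₂ → a m n₁ * a m n₂ ≤ a m (n₁ + n₂ + 1))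
    {p q k l m n : ℕ} (hp : 1 ≤ p) (hq : 1 ≤ q) (hm : k * (p + 1) < m) (hn : l * (q + 1) < n) :
    a p q ^ (k * l) ≤ a m n := by
  have hn1 : 1 ≤ n := by omega
  calc a p q ^ (k * l) = (a p q ^ l) ^ k := by rw [mul_comm, pow_mul]
    _ ≤ a p n ^ k := by
      gcongr
      · linarith [one_le_pow₀ (h1 p q hp hq) (n := l)]
      · exact pow_le_of_mul_lt (h1 p · hp) (h3 p · · hp) hq hn
    _ ≤ a m n := pow_le_of_mul_lt (h1 · n · hn1) (h2 · · n · · hn1) hp hm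

theorem tendsto_pred_div_mul_div_atTop {d : ℕ} (hd : 0 < d) :
    Tendsto (fun m : ℕ => (((m - 1) / d : ℕ) : ℝ) * d / m) atTop (𝓝 1) := by
  have hlower : Tendsto (fun m : ℕ => 1 - (d : ℝ) / m) atTop (𝓝 1) := by
    simpa using tendsto_const_nhds.sub (tendsto_const_div_atTop_nhds_zero_nat (d : ℝ))
  refine tendsto_of_tendsto_of_tendsto_of_le_of_le' hlower tendsto_const_nhds ?_ ?_
  · filter_upwards [eventually_ge_atTop 1] with m hm
    have hm0 : (0 : ℝ) < m := by exact_mod_cast hm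
    have hmd : m ≤ (m - 1) / d * d + d := by have := Nat.lt_div_mul_add (a := m - 1) hd; omega
    rw [sub_le_iff_le_add, ← add_div, le_div_iff₀ hm0, one_mul]
    exact_mod_cast hmd
  · filter_upwards with m
    refine div_le_one_of_le₀ ?_ (Nat.cast_nonneg m)
    exact_mod_cast (Nat.div_mul_le_self (m - 1) d).trans (Nat.sub_le m 1)

theorem tendsto_rpow_mul_prod_atTop {c : ℝ} (hc : 0 < c) {u v : ℕ → ℝ}
    (hu : Tendsto u atTop (𝓝 1)) (hv : Tendsto v atTop (𝓝 1)) :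
    Tendsto (fun x : ℕ × ℕ => c ^ (u x.1 * v x.2)) atTop (𝓝 c) := by
  have huv : Tendsto (fun x : ℕ × ℕ => u x.1 * v x.2) atTop (𝓝 1) := by
    rw [← prod_atTop_atTop_eq]
    simpa using (hu.comp tendsto_fst).mul (hv.comp tendsto_snd)
  simpa using tendsto_const_nhds.rpow huv (Or.inl hc.ne')

theorem rpow_one_div_mul_le_rpow {x L : ℝ} (hx : 0 ≤ x) {m n : ℕ} (hm : 1 ≤ m) (hn : 1 ≤ n)
    (hxL : x ^ ((1 : ℝ) / ((m + 1) * (n + 1))) ≤ L) :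
    x ^ ((1 : ℝ) / (m * n)) ≤ L ^ ((1 + (1 : ℝ) / m) * (1 + (1 : ℝ) / n)) := by
  have hm0 : (m : ℝ) ≠ 0 := by positivity
  have hn0 : (n : ℝ) ≠ 0 := by positivity
  have hexp : (1 : ℝ) / (m * n) = 1 / ((m + 1) * (n + 1)) * ((1 + 1 / m) * (1 + 1 / n)) := by
    field_simp
  rw [hexp, Real.rpow_mul hx]
  gcongr

theorem rpow_mul_le_rpow_one_div_mul (a : ℕ → ℕ → ℝ) (h1 : ∀ m n : ℕ, 1 ≤ m → 1 ≤ n → 1 ≤ a m n)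
    (h2 : ∀ m₁ m₂ n : ℕ, 1 ≤ m₁ → 1 ≤ m₂ → 1 ≤ n → a m₁ n * a m₂ n ≤ a (m₁ + m₂ + 1) n)
    (h3 : ∀ m n₁ n₂ : ℕ, 1 ≤ m → 1 ≤ n₁ → 1 ≤ n₂ → a m n₁ * a m n₂ ≤ a m (n₁ + n₂ + 1))
    {p q m n : ℕ} (hp : 1 ≤ p) (hq : 1 ≤ q) (hm : 1 ≤ m) (hn : 1 ≤ n) :
    (a p q ^ ((1 : ℝ) / ((p + 1) * (q + 1)))) ^
        ((((m - 1) / (p + 1) : ℕ) : ℝ) * (p + 1 : ℕ) / m *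
          ((((n - 1) / (q + 1) : ℕ) : ℝ) * (q + 1 : ℕ) / n)) ≤
      a m n ^ ((1 : ℝ) / (m * n)) := by
  set k := (m - 1) / (p + 1)
  set l := (n - 1) / (q + 1)
  have hapq : 0 ≤ a p q := by linarith [h1 p q hp hq]
  have hkm : k * (p + 1) < m := (Nat.div_mul_le_self _ _).trans_lt (by omega)
  have hln : l * (q + 1) < n := (Nat.div_mul_le_self _ _).trans_lt (by omega)
  have hm0 : (m : ℝ) ≠ 0 := by positivity
  have hn0 : (n : ℝ) ≠ 0 := by positivity
  have hexp : (1 : ℝ) / ((p + 1) * (q + 1)) *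
      ((k : ℝ) * (p + 1 : ℕ) / m * ((l : ℝ) * (q + 1 : ℕ) / n)) = ((k * l : ℕ) : ℝ) * (1 / (m * n)) := by
    push_cast
    field_simp
  rw [← Real.rpow_mul hapq, hexp, Real.rpow_mul hapq, Real.rpow_natCast]
  gcongr
  exact pow_mul_le_of_mul_lt a h1 h2 h3 hp hq hkm hln

theorem fekete_two_dim (a : ℕ → ℕ → ℝ)
    (h1 : ∀ m n : ℕ, 1 ≤ m → 1 ≤ n → 1 ≤ a m n)
    (h2 : ∀ m₁ m₂ n : ℕ, 1 ≤ m₁ → 1 ≤ m₂ → 1 ≤ n →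
      a m₁ n * a m₂ n ≤ a (m₁ + m₂ + 1) n)
    (h3 : ∀ m n₁ n₂ : ℕ, 1 ≤ m → 1 ≤ n₁ → 1 ≤ n₂ →
      a m n₁ * a m n₂ ≤ a m (n₁ + n₂ + 1))
    (hbdd : BddAbove {x : ℝ | ∃ m n : ℕ, 1 ≤ m ∧ 1 ≤ n ∧
      x = a m n ^ ((1 : ℝ) / ((m + 1) * (n + 1)))}) :
    ∀ ε > (0 : ℝ), ∃ N : ℕ, ∀ m n : ℕ, N ≤ m → N ≤ n →
      |a m n ^ ((1 : ℝ) / (m * n)) -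
        sSup {x : ℝ | ∃ m' n' : ℕ, 1 ≤ m' ∧ 1 ≤ n' ∧
          x = a m' n' ^ ((1 : ℝ) / ((m' + 1) * (n' + 1)))}| < ε := by
  intro ε hε
  set S := {x : ℝ | ∃ m' n' : ℕ, 1 ≤ m' ∧ 1 ≤ n' ∧
    x = a m' n' ^ ((1 : ℝ) / ((m' + 1) * (n' + 1)))}
  have hmem : ∀ m n : ℕ, 1 ≤ m → 1 ≤ n → a m n ^ ((1 : ℝ) / ((m + 1) * (n + 1))) ∈ S :=
    fun m n hm hn => ⟨m, n, hm, hn, rfl⟩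
  have hL : 0 < sSup S := lt_of_lt_of_le one_pos <|
    (Real.one_le_rpow (h1 1 1 le_rfl le_rfl) (by positivity)).trans
      (le_csSup hbdd (hmem 1 1 le_rfl le_rfl))
  suffices Tendsto (fun x : ℕ × ℕ => a x.1 x.2 ^ ((1 : ℝ) / (x.1 * x.2))) atTop (𝓝 (sSup S)) by
    obtain ⟨N, hN⟩ := eventually_atTop_prod_self'.1 (Metric.tendsto_nhds.1 this ε hε)
    exact ⟨N, fun m n hm hn => by simpa only [Real.dist_eq] using hN m hm n hn⟩
  refine tendsto_order.2 ⟨fun b hb => ?_, fun b hb => ?_⟩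
  · obtain ⟨_, ⟨p, q, hp, hq, rfl⟩, hbα⟩ := exists_lt_of_lt_csSup ⟨_, hmem 1 1 le_rfl le_rfl⟩ hb
    have hα : 0 < a p q ^ ((1 : ℝ) / ((p + 1) * (q + 1))) :=
      Real.rpow_pos_of_pos (by linarith [h1 p q hp hq]) _
    filter_upwards [(tendsto_rpow_mul_prod_atTop hα (tendsto_pred_div_mul_div_atTop p.succ_pos)
      (tendsto_pred_div_mul_div_atTop q.succ_pos)).eventually (lt_mem_nhds hbα),
      eventually_ge_atTop (1, 1)] with x hbx hx
    exact hbx.trans_le (rpow_mul_le_rpow_one_div_mul a h1 h2 h3 hp hq hx.1 hx.2)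
  · have hinv : Tendsto (fun m : ℕ => 1 + (1 : ℝ) / m) atTop (𝓝 1) := by
      simpa using tendsto_const_nhds.add (tendsto_const_div_atTop_nhds_zero_nat (1 : ℝ))
    filter_upwards [(tendsto_rpow_mul_prod_atTop hL hinv hinv).eventually (gt_mem_nhds hb),
      eventually_ge_atTop (1, 1)] with x hxb hx
    refine lt_of_le_of_lt (rpow_one_div_mul_le_rpow ?_ hx.1 hx.2 ?_) hxb
    · linarith [h1 x.1 x.2 hx.1 hx.2]
    · exact le_csSup hbdd (hmem x.1 x.2 hx.1 hx.2)
end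

section
/- With A₁, B₁, C₁ the seed matrices A₁ = [[0,0,1],[0,0,0],[0,0,0]], B₁ = [[0,0,0],[1,0,0],[1,1,0]] (at activity z = 1), and D₁ = [1 1 0], E₁ = [0 1 1]ᵗ, for every n ≥ 1 the quantity D₁ · (A₁+B₁)ⁿ · E₁ equals the number of maximal independent sets of the path graph Pₙ. -/
def A₁ : Matrix (Fin 3) (Fin 3) ℤ := !![0, 0, 1; 0, 0, 0; 0, 0, 0]
def B₁ : Matrix (Fin 3) (Fin 3) ℤ := !![0, 0, 0; 1, 0, 0; 1, 1, 0]
def D₁ : Matrix (Fin 1) (Fin 3) ℤ := !![1, 1, 0]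
def E₁ : Matrix (Fin 3) (Fin 1) ℤ := !![0; 1; 1]


def misFun (n : ℕ) (f : Fin n → Bool) : Prop :=
  (∀ i j : Fin n, i.val + 1 = j.val → ¬(f i = true ∧ f j = true)) ∧
  (∀ i : Fin n, f i = false → ∃ j : Fin n, (i.val + 1 = j.val ∨ j.val + 1 = i.val) ∧ f j = true)

instance (n : ℕ) : DecidablePred (misFun n) := fun f => by
  unfold misFun; infer_instance

open Classical in
noncomputable def misEquiv (n : ℕ) :
    {S : Set (Fin n) // IsMaxIndep (SimpleGraph.pathGraph n) S} ≃ {f : Fin n → Bool // misFun n f} where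
  toFun S := ⟨fun i => decide (i ∈ S.1), by
    obtain ⟨S, hi, hd⟩ := S
    constructor
    · intro i j hij ⟨h1, h2⟩
      simp only [decide_eq_true_eq] at h1 h2
      exact hi i h1 j h2 (SimpleGraph.pathGraph_adj.2 (Or.inl hij))
    · intro i hifalse
      have : i ∉ S := by simpa using hifalse
      obtain ⟨j, hjS, hadj⟩ := hd i this
      exact ⟨j, (SimpleGraph.pathGraph_adj.1 hadj), by simpa using hjS⟩⟩
  invFun f := ⟨{i | f.1 i = true}, by
    obtain ⟨f, hi, hd⟩ := f
    constructor
    · intro u hu v hv hadj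
      rcases SimpleGraph.pathGraph_adj.1 hadj with h | h
      · exact hi u v h ⟨hu, hv⟩
      · exact hi v u h ⟨hv, hu⟩
    · intro v hv
      obtain ⟨j, hadj, hj⟩ := hd v (by simpa using hv)
      exact ⟨j, hj, SimpleGraph.pathGraph_adj.2 hadj⟩⟩
  left_inv S := by
    ext i; simp
  right_inv f := by
    ext i; simp

theorem numMIS_eq (n : ℕ) :
    numMIS (SimpleGraph.pathGraph n) = Nat.card {f : Fin n → Bool // misFun n f} :=
  Nat.card_congr (misEquiv n)
section Recurrence
variable (n : ℕ)

/-- Extend f on Fin (n+1) by: position n+1 ↦ false, n+2 ↦ true. -/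
def ext1 (f : Fin (n+1) → Bool) : Fin (n+3) → Bool :=
  fun i => if h : i.val < n + 1 then f ⟨i.val, h⟩ else decide (i.val = n + 2)

/-- Extend f on Fin n by: position n ↦ false, n+1 ↦ true, n+2 ↦ false. -/
def ext2 (f : Fin n → Bool) : Fin (n+3) → Bool :=
  fun i => if h : i.val < n then f ⟨i.val, h⟩ else decide (i.val = n + 1)

variable {n}

lemma ext1_lt (f : Fin (n+1) → Bool) (i : Fin (n+3)) (h : i.val < n + 1) :
    ext1 n f i = f ⟨i.val, h⟩ := dif_pos h

lemma ext1_ge (f : Fin (n+1) → Bool) (i : Fin (n+3)) (h : ¬ i.val < n + 1) :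
    ext1 n f i = decide (i.val = n + 2) := dif_neg h

lemma ext2_lt (f : Fin n → Bool) (i : Fin (n+3)) (h : i.val < n) :
    ext2 n f i = f ⟨i.val, h⟩ := dif_pos h

lemma ext2_ge (f : Fin n → Bool) (i : Fin (n+3)) (h : ¬ i.val < n) :
    ext2 n f i = decide (i.val = n + 1) := dif_neg h

lemma misFun_aux1 {f : Fin (n+3) → Bool} (hf : misFun (n+3) f)
    (hlast : f (Fin.last (n+2)) = true) : f ⟨n+1, by omega⟩ = false := by
  have := hf.1 ⟨n+1, by omega⟩ (Fin.last (n+2)) (by simp [Fin.last])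
  simp only [hlast, and_true, Bool.not_eq_true] at this
  exact this

def equiv1 (n : ℕ) :
    {x : {f : Fin (n+3) → Bool // misFun (n+3) f} // x.1 (Fin.last (n+2)) = true} ≃
    {f : Fin (n+1) → Bool // misFun (n+1) f} where
  toFun x := ⟨fun i => x.1.1 ⟨i.val, by omega⟩, by
    obtain ⟨⟨f, hf⟩, hlast⟩ := x
    replace hlast : f (Fin.last (n+2)) = true := hlast
    have hn1 : f ⟨n+1, by omega⟩ = false := misFun_aux1 hf hlast
    obtain ⟨hi, hd⟩ := hf
    constructor
    · intro i j hij h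
      exact hi ⟨i.val, by omega⟩ ⟨j.val, by omega⟩ hij h
    · intro i hif
      obtain ⟨j, hadj, hj⟩ := hd ⟨i.val, by omega⟩ hif
      have hj1 : j.val ≠ n + 1 := by
        intro h
        rw [show j = ⟨n+1, by omega⟩ from Fin.ext h] at hj
        simp [hn1] at hj
      have hjlt : j.val < n + 1 := by
        have := j.isLt; have hi1 := i.isLt
        simp only at hadj
        omega
      exact ⟨⟨j.val, hjlt⟩, hadj, hj⟩⟩
  invFun f := ⟨⟨ext1 n f.1, by
    obtain ⟨f, hi, hd⟩ := f
    constructor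
    · intro i j hij h
      obtain ⟨h1, h2⟩ := h
      rcases lt_or_ge i.val (n+1) with hilt | hige
      · rcases lt_or_ge j.val (n+1) with hjlt | hjge
        · rw [ext1_lt _ _ hilt] at h1
          rw [ext1_lt _ _ hjlt] at h2
          exact hi ⟨i.val, hilt⟩ ⟨j.val, hjlt⟩ hij ⟨h1, h2⟩
        · have : j.val = n + 1 := by omega
          rw [ext1_ge _ _ (by omega)] at h2
          simp [this] at h2
      · have : i.val = n + 1 ∨ i.val = n + 2 := by have := i.isLt; omega
        rcases this with h | h
        · rw [ext1_ge _ _ (by omega)] at h1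
          simp [h] at h1
        · have := j.isLt; omega
    · intro i hif
      rcases lt_or_ge i.val (n+1) with hilt | hige
      · rw [ext1_lt _ _ hilt] at hif
        obtain ⟨j, hadj, hj⟩ := hd ⟨i.val, hilt⟩ hif
        refine ⟨⟨j.val, by omega⟩, hadj, ?_⟩
        rw [ext1_lt _ _ (by exact j.isLt)]
        exact hj
      · have : i.val = n + 1 ∨ i.val = n + 2 := by have := i.isLt; omega
        rcases this with h | h
        · refine ⟨⟨n+2, by omega⟩, by simp [h], ?_⟩
          rw [ext1_ge _ _ (by simp)]
          simp
        · rw [ext1_ge _ _ (by omega)] at hif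
          simp [h] at hif⟩, by
    show ext1 n f.1 (Fin.last (n+2)) = true
    rw [ext1_ge _ _ (by simp [Fin.last])]
    simp [Fin.last]⟩
  left_inv x := by
    apply Subtype.ext
    apply Subtype.ext
    funext i
    have hlast : x.1.1 (Fin.last (n+2)) = true := x.2
    have hn1 : x.1.1 ⟨n+1, by omega⟩ = false := misFun_aux1 x.1.2 hlast
    show ext1 n (fun i => x.1.1 ⟨i.val, by omega⟩) i = x.1.1 i
    rcases lt_or_ge i.val (n+1) with hilt | hige
    · rw [ext1_lt _ _ hilt]
    · have : i.val = n + 1 ∨ i.val = n + 2 := by have := i.isLt; omega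
      rcases this with h | h
      · rw [ext1_ge _ _ (by omega), show i = ⟨n+1, by omega⟩ from Fin.ext h, hn1]
        simp [h]
      · rw [ext1_ge _ _ (by omega), show i = Fin.last (n+2) from Fin.ext (by simp [Fin.last, h]),
          hlast]
        simp [Fin.last, h]
  right_inv f := by
    apply Subtype.ext
    funext i
    show ext1 n f.1 ⟨i.val, by omega⟩ = f.1 i
    rw [ext1_lt _ _ (by exact i.isLt)]

end Recurrence
section Recurrence2
variable {n : ℕ}

lemma misFun_aux2 {f : Fin (n+3) → Bool} (hf : misFun (n+3) f)
    (hlast : f (Fin.last (n+2)) = false) : f ⟨n+1, by omega⟩ = true := by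
  obtain ⟨j, hadj, hj⟩ := hf.2 (Fin.last (n+2)) hlast
  have : j.val = n + 1 := by
    have := j.isLt
    simp only [Fin.last] at hadj
    omega
  rw [show j = ⟨n+1, by omega⟩ from Fin.ext this] at hj
  exact hj

lemma misFun_aux3 {f : Fin (n+3) → Bool} (hf : misFun (n+3) f)
    (hlast : f (Fin.last (n+2)) = false) : f ⟨n, by omega⟩ = false := by
  have h1 := misFun_aux2 hf hlast
  have := hf.1 ⟨n, by omega⟩ ⟨n+1, by omega⟩ rfl
  simp only [h1, and_true, Bool.not_eq_true] at this
  exact this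

def equiv2 (n : ℕ) :
    {x : {f : Fin (n+3) → Bool // misFun (n+3) f} // ¬ x.1 (Fin.last (n+2)) = true} ≃
    {f : Fin n → Bool // misFun n f} where
  toFun x := ⟨fun i => x.1.1 ⟨i.val, by omega⟩, by
    obtain ⟨⟨f, hf⟩, hlast'⟩ := x
    replace hlast' : ¬ f (Fin.last (n+2)) = true := hlast'
    have hlast : f (Fin.last (n+2)) = false := by simpa using hlast'
    have hn1 : f ⟨n+1, by omega⟩ = true := misFun_aux2 hf hlast
    have hn0 : f ⟨n, by omega⟩ = false := misFun_aux3 hf hlast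
    obtain ⟨hi, hd⟩ := hf
    constructor
    · intro i j hij h
      exact hi ⟨i.val, by omega⟩ ⟨j.val, by omega⟩ hij h
    · intro i hif
      obtain ⟨j, hadj, hj⟩ := hd ⟨i.val, by omega⟩ hif
      have hj0 : j.val ≠ n := by
        intro h
        rw [show j = ⟨n, by omega⟩ from Fin.ext h] at hj
        simp [hn0] at hj
      have hjlt : j.val < n := by
        have := j.isLt; have hi1 := i.isLt
        simp only at hadj
        omega
      exact ⟨⟨j.val, hjlt⟩, hadj, hj⟩⟩
  invFun f := ⟨⟨ext2 n f.1, by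
    obtain ⟨f, hi, hd⟩ := f
    constructor
    · intro i j hij h
      obtain ⟨h1, h2⟩ := h
      rcases lt_or_ge i.val n with hilt | hige
      · rcases lt_or_ge j.val n with hjlt | hjge
        · rw [ext2_lt _ _ hilt] at h1
          rw [ext2_lt _ _ hjlt] at h2
          exact hi ⟨i.val, hilt⟩ ⟨j.val, hjlt⟩ hij ⟨h1, h2⟩
        · have : j.val = n := by omega
          rw [ext2_ge _ _ (by omega)] at h2
          simp [this] at h2
      · have : i.val = n ∨ i.val = n + 1 ∨ i.val = n + 2 := by have := i.isLt; omega
        rcases this with h | h | h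
        · rw [ext2_ge _ _ (by omega)] at h1
          simp [h] at h1
        · have : j.val = n + 2 := by omega
          rw [ext2_ge _ _ (by omega)] at h2
          simp [this] at h2
        · have := j.isLt; omega
    · intro i hif
      rcases lt_or_ge i.val n with hilt | hige
      · rw [ext2_lt _ _ hilt] at hif
        obtain ⟨j, hadj, hj⟩ := hd ⟨i.val, hilt⟩ hif
        refine ⟨⟨j.val, by omega⟩, hadj, ?_⟩
        rw [ext2_lt _ _ (by exact j.isLt)]
        exact hj
      · have : i.val = n ∨ i.val = n + 1 ∨ i.val = n + 2 := by have := i.isLt; omega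
        rcases this with h | h | h
        · refine ⟨⟨n+1, by omega⟩, by simp [h], ?_⟩
          rw [ext2_ge _ _ (by simp)]
          simp
        · rw [ext2_ge _ _ (by omega)] at hif
          simp [h] at hif
        · refine ⟨⟨n+1, by omega⟩, by simp [h], ?_⟩
          rw [ext2_ge _ _ (by simp)]
          simp⟩, by
    show ¬ ext2 n f.1 (Fin.last (n+2)) = true
    rw [ext2_ge _ _ (by simp [Fin.last])]
    simp [Fin.last]⟩
  left_inv x := by
    apply Subtype.ext
    apply Subtype.ext
    funext i
    have hlast : x.1.1 (Fin.last (n+2)) = false := by simpa using x.2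
    have hn1 : x.1.1 ⟨n+1, by omega⟩ = true := misFun_aux2 x.1.2 hlast
    have hn0 : x.1.1 ⟨n, by omega⟩ = false := misFun_aux3 x.1.2 hlast
    show ext2 n (fun i => x.1.1 ⟨i.val, by omega⟩) i = x.1.1 i
    rcases lt_or_ge i.val n with hilt | hige
    · rw [ext2_lt _ _ hilt]
    · have : i.val = n ∨ i.val = n + 1 ∨ i.val = n + 2 := by have := i.isLt; omega
      rcases this with h | h | h
      · rw [ext2_ge _ _ (by omega), show i = ⟨n, by omega⟩ from Fin.ext h, hn0]
        simp [h]
      · rw [ext2_ge _ _ (by omega), show i = ⟨n+1, by omega⟩ from Fin.ext h, hn1]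
        simp [h]
      · rw [ext2_ge _ _ (by omega), show i = Fin.last (n+2) from Fin.ext (by simp [Fin.last, h]),
          hlast]
        simp [Fin.last, h]
  right_inv f := by
    apply Subtype.ext
    funext i
    show ext2 n f.1 ⟨i.val, by omega⟩ = f.1 i
    rw [ext2_lt _ _ (by exact i.isLt)]

lemma misCard_rec (n : ℕ) :
    Nat.card {f : Fin (n+3) → Bool // misFun (n+3) f} =
    Nat.card {f : Fin (n+1) → Bool // misFun (n+1) f} +
    Nat.card {f : Fin n → Bool // misFun n f} := by
  classical
  rw [← Nat.card_congr (Equiv.sumCompl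
    (fun x : {f : Fin (n+3) → Bool // misFun (n+3) f} => x.1 (Fin.last (n+2)) = true)),
    Nat.card_sum, Nat.card_congr (equiv1 n), Nat.card_congr (equiv2 n)]

end Recurrence2

noncomputable def aSeq (n : ℕ) : ℤ := (D₁ * (A₁ + B₁) ^ n * E₁) 0 0

lemma M_cube : (A₁ + B₁) ^ 3 = (A₁ + B₁) + 1 := by
  ext i j
  fin_cases i <;> fin_cases j <;>
    norm_num [A₁, B₁, pow_succ, Matrix.mul_apply, Fin.sum_univ_succ, Matrix.one_apply, Fin.ext_iff]

lemma aSeq_rec (n : ℕ) : aSeq (n + 3) = aSeq (n + 1) + aSeq n := by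
  unfold aSeq
  have h : (A₁ + B₁) ^ (n + 3) = (A₁ + B₁) ^ (n + 1) + (A₁ + B₁) ^ n := by
    rw [pow_add, M_cube, mul_add, mul_one, ← pow_succ]
  rw [h, Matrix.mul_add, Matrix.add_mul, Matrix.add_apply]

lemma aSeq_one : aSeq 1 = 1 := by
  norm_num [aSeq, A₁, B₁, D₁, E₁, pow_one, Matrix.mul_apply, Fin.sum_univ_succ]

lemma aSeq_two : aSeq 2 = 2 := by
  norm_num [aSeq, A₁, B₁, D₁, E₁, pow_succ, Matrix.mul_apply, Fin.sum_univ_succ]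

lemma aSeq_three : aSeq 3 = 2 := by
  norm_num [aSeq, A₁, B₁, D₁, E₁, pow_succ, Matrix.mul_apply, Fin.sum_univ_succ]

lemma key : ∀ n : ℕ, aSeq (n + 1) = (Nat.card {f : Fin (n+1) → Bool // misFun (n+1) f} : ℤ) := by
  intro n
  induction n using Nat.strong_induction_on with
  | _ n ih =>
    match n with
    | 0 => rw [aSeq_one, show Nat.card {f : Fin 1 → Bool // misFun 1 f} = 1 from by
        rw [Nat.card_eq_fintype_card]; decide]; norm_num
    | 1 => rw [aSeq_two, show Nat.card {f : Fin 2 → Bool // misFun 2 f} = 2 from by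
        rw [Nat.card_eq_fintype_card]; decide]; norm_num
    | 2 => rw [aSeq_three, show Nat.card {f : Fin 3 → Bool // misFun 3 f} = 2 from by
        rw [Nat.card_eq_fintype_card]; decide]; norm_num
    | (m+3) =>
      have h1 := ih (m+1) (by omega)
      have h2 := ih m (by omega)
      have := aSeq_rec (m+1)
      rw [show m+3+1 = m+1+3 from by omega, this, h1, h2, misCard_rec (m+1)]
      push_cast
      ring

theorem state_matrix_path (n : ℕ) (hn : 1 ≤ n) :
    (D₁ * (A₁ + B₁) ^ n * E₁) 0 0 = (numMIS (SimpleGraph.pathGraph n) : ℤ) := by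
  obtain ⟨m, rfl⟩ : ∃ m, n = m + 1 := ⟨n - 1, by omega⟩
  rw [numMIS_eq]
  exact key m
end
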